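/- arXiv:1902.00672 — 3 statements merged into one kernel-verified Lean document; each statement's English description precedes it below -/
import Mathlib

section
/- For the greedy algorithm maximizing a non-negative, monotone non-decreasing, submodular function f under a knapsack constraint Σ_{i∈S} φ_i ≤ L (with φ_i > 0), the set S returned — taken as the better of the greedy-by-cost-benefit solution and the best feasible singleton — satisfies f(S) ≥ (1/2)(1 − 1/e) f(S*) where S* is an optimal feasible set. -/
open Finset

private lemma f_union_le {α : Type*} [DecidableEq α] (f : Finset α → ℝ)
    (hmono : ∀ (S : Finset α) (u : α), u ∉ S → f S ≤ f (insert u S)) :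
    ∀ (D A : Finset α), f A ≤ f (A ∪ D) := by
  intro D
  induction D using Finset.induction_on with
  | empty => intro A; simp
  | insert a D ha ih =>
      intro A
      have h1 : f A ≤ f (A ∪ D) := ih A
      rw [Finset.union_insert]
      by_cases hm : a ∈ A ∪ D
      · rw [Finset.insert_eq_self.mpr hm]; exact h1
      · exact h1.trans (hmono _ a hm)

private lemma f_mono_subset {α : Type*} [DecidableEq α] (f : Finset α → ℝ)
    (hmono : ∀ (S : Finset α) (u : α), u ∉ S → f S ≤ f (insert u S))
    {A B : Finset α} (h : A ⊆ B) : f A ≤ f B := by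
  have := f_union_le f hmono B A
  rwa [Finset.union_eq_right.mpr h] at this

private lemma f_marg_sum {α : Type*} [DecidableEq α] (f : Finset α → ℝ)
    (hmono : ∀ (S : Finset α) (u : α), u ∉ S → f S ≤ f (insert u S))
    (hsub : ∀ (S T : Finset α), S ⊆ T → ∀ u : α, u ∉ T →
      f (insert u T) - f T ≤ f (insert u S) - f S) :
    ∀ (D A : Finset α), f (A ∪ D) - f A ≤ ∑ v ∈ D, (f (insert v A) - f A) := by
  intro D
  induction D using Finset.induction_on with
  | empty => intro A; simp
  | insert a D ha ih =>
      intro A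
      rw [Finset.sum_insert ha, Finset.union_insert]
      have h2 : f (A ∪ D) - f A ≤ ∑ v ∈ D, (f (insert v A) - f A) := ih A
      have h3 : f (insert a (A ∪ D)) - f (A ∪ D) ≤ f (insert a A) - f A := by
        by_cases hm : a ∈ A ∪ D
        · rw [Finset.insert_eq_self.mpr hm, sub_self]
          by_cases hA : a ∈ A
          · rw [Finset.insert_eq_self.mpr hA, sub_self]
          · linarith [hmono A a hA]
        · exact hsub A (A ∪ D) Finset.subset_union_left a hm
      linarith

private lemma decay_lemma (L : ℝ) (hL : 0 < L) (g c : ℕ → ℝ) :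
    ∀ N : ℕ, 0 ≤ g 0 → (∀ t, t < N → c t ≤ L) →
    (∀ t, t < N → g (t+1) ≤ (1 - c t / L) * g t) →
    g N ≤ Real.exp (-(∑ t ∈ Finset.range N, c t) / L) * g 0 := by
  intro N
  induction N with
  | zero => intro hg0 _ _; simp
  | succ n ih =>
      intro hg0 hcL hrec
      have ihn := ih hg0 (fun t ht => hcL t (ht.trans (Nat.lt_succ_self n)))
        (fun t ht => hrec t (ht.trans (Nat.lt_succ_self n)))
      have h1 := hrec n (Nat.lt_succ_self n)
      have hfac0 : 0 ≤ 1 - c n / L := by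
        have h := hcL n (Nat.lt_succ_self n)
        have : c n / L ≤ 1 := (div_le_one hL).mpr h
        linarith
      have hfacexp : 1 - c n / L ≤ Real.exp (-(c n / L)) := by
        linarith [Real.add_one_le_exp (-(c n / L))]
      have hexpsplit : Real.exp (-(∑ t ∈ Finset.range (n+1), c t) / L)
          = Real.exp (-(c n / L)) * Real.exp (-(∑ t ∈ Finset.range n, c t) / L) := by
        rw [← Real.exp_add, Finset.sum_range_succ]
        congr 1
        field_simp
        ring
      rcases le_or_gt (g n) 0 with hneg | hpos
      · have h2 : g (n+1) ≤ 0 := h1.trans (by nlinarith)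
        have h3 : 0 ≤ Real.exp (-(∑ t ∈ Finset.range (n+1), c t) / L) * g 0 :=
          mul_nonneg (Real.exp_pos _).le hg0
        linarith
      · calc g (n+1) ≤ (1 - c n / L) * g n := h1
          _ ≤ Real.exp (-(c n / L)) * g n := mul_le_mul_of_nonneg_right hfacexp hpos.le
          _ ≤ Real.exp (-(c n / L)) * (Real.exp (-(∑ t ∈ Finset.range n, c t) / L) * g 0) :=
              mul_le_mul_of_nonneg_left ihn (Real.exp_pos _).le
          _ = Real.exp (-(∑ t ∈ Finset.range (n+1), c t) / L) * g 0 := by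
              rw [hexpsplit]; ring

private lemma final_arith (e1 F Om s e' : ℝ) (he1 : 1 < e1) (hs : 0 < s)
    (he' : 0 < e') (hprod : e' * (s * e1) = 1)
    (hOm : 0 ≤ Om) (hF : 0 ≤ F)
    (hA : (1 - e') * Om ≤ F) (hB : (1 - s) * (Om - F) ≤ F) :
    1/2 * (1 - 1/e1) * Om ≤ F := by
  have he1p : (0:ℝ) < e1 := by linarith
  have hconv : 1/2 * (1 - 1/e1) * Om = ((e1 - 1) * Om) / (2 * e1) := by
    field_simp
  rw [hconv, div_le_iff₀ (by positivity)]
  rcases le_or_gt s (2/(e1+1)) with hcase | hcase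
  · -- use hB
    have h1 : s * (e1 + 1) ≤ 2 := by
      have := (le_div_iff₀ (show (0:ℝ) < e1 + 1 by linarith)).mp hcase
      linarith
    have hs1 : s < 1 := lt_of_le_of_lt hcase (by rw [div_lt_one (by linarith)]; linarith)
    have hB2 : (1 - s) * Om ≤ (2 - s) * F := by nlinarith [hB]
    nlinarith [hB2, mul_nonneg hOm (show (0:ℝ) ≤ 2 - s * (e1 + 1) by linarith),
      show (0:ℝ) < 2 - s by linarith]
  · -- use hA
    have h1 : 2 < s * (e1 + 1) := by
      have := (div_lt_iff₀ (show (0:ℝ) < e1 + 1 by linarith)).mp hcase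
      linarith
    have h3 : (0:ℝ) < e1 * e' := by positivity
    have h4 := mul_lt_mul_of_pos_right h1 h3
    have h5 : s * (e1 + 1) * (e1 * e') = e1 + 1 := by
      rw [show s * (e1 + 1) * (e1 * e') = (e1 + 1) * (e' * (s * e1)) from by ring, hprod,
        mul_one]
    have h2 : 2 * (e1 * e') ≤ e1 + 1 := by linarith
    have hint1 : (2 * e1) * ((1 - e') * Om) ≤ (2 * e1) * F :=
      mul_le_mul_of_nonneg_left hA (by linarith)
    have hint2 : 0 ≤ Om * (e1 + 1 - 2 * (e1 * e')) := mul_nonneg hOm (by linarith)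
    nlinarith [hint1, hint2]

/-- Greedy guarantee for maximizing a nonnegative monotone submodular function
under a knapsack constraint: the better of the greedy-by-cost-benefit solution
and the best feasible singleton achieves a `(1/2)(1 - 1/e)` approximation. -/
theorem greedy_knapsack_guarantee {α : Type*} [DecidableEq α] [Fintype α]
    (f : Finset α → ℝ) (φ : α → ℝ) (L : ℝ)
    (hφ : ∀ i, 0 < φ i) (hL : 0 < L)
    (hnonneg : ∀ S : Finset α, 0 ≤ f S) (hf0 : f ∅ = 0)
    (hmono : ∀ (S : Finset α) (u : α), u ∉ S → f S ≤ f (insert u S))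
    (hsub : ∀ (S T : Finset α), S ⊆ T → ∀ u : α, u ∉ T →
      f (insert u T) - f T ≤ f (insert u S) - f S)
    -- the greedy sequence S 0 = ∅, ..., S T, stopping when no admissible element remains
    (T : ℕ) (S : ℕ → Finset α) (hS0 : S 0 = ∅)
    (hstep : ∀ t < T, ∃ s : α, s ∉ S t ∧ (∑ i ∈ insert s (S t), φ i) ≤ L ∧
      S (t + 1) = insert s (S t) ∧
      ∀ s' : α, s' ∉ S t → (∑ i ∈ insert s' (S t), φ i) ≤ L →
        (f (insert s' (S t)) - f (S t)) / φ s' ≤ (f (insert s (S t)) - f (S t)) / φ s)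
    (hstop : ∀ s : α, s ∉ S T → ¬ ((∑ i ∈ insert s (S T), φ i) ≤ L))
    -- G is the better of the greedy set and the best feasible singleton
    (G : Finset α)
    (hG : G = S T ∨ ∃ i : α, φ i ≤ L ∧ G = {i})
    (hG1 : f (S T) ≤ f G)
    (hG2 : ∀ i : α, φ i ≤ L → f {i} ≤ f G)
    -- S* is an optimal feasible set
    (Sopt : Finset α) (hopt_feas : (∑ i ∈ Sopt, φ i) ≤ L)
    (hopt : ∀ A : Finset α, (∑ i ∈ A, φ i) ≤ L → f A ≤ f Sopt) :
    f G ≥ (1 / 2) * (1 - 1 / Real.exp 1) * f Sopt := by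
  classical
  rw [ge_iff_le]
  have hΩ0 : 0 ≤ f Sopt := hnonneg Sopt
  have hFG0 : 0 ≤ f G := hnonneg G
  have hexp1 : (1:ℝ) < Real.exp 1 := by
    have := Real.exp_one_gt_d9; linarith
  rcases le_or_gt (f Sopt) (2 * f G) with heasy | hhard
  · have h1 : 0 ≤ f Sopt * (1 / Real.exp 1) := by positivity
    nlinarith
  -- hard case
  choose sel hselmem hselfeas hselS hselmax using hstep
  set c : ℕ → ℝ := fun t => (∑ i ∈ S (t+1), φ i) - (∑ i ∈ S t, φ i) with hcdef
  have hCpos : ∀ n, (0:ℝ) ≤ ∑ i ∈ S n, φ i := fun n => Finset.sum_nonneg fun i _ => (hφ i).le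
  have hceq : ∀ t (ht : t < T), c t = φ (sel t ht) := by
    intro t ht
    simp only [hcdef]
    rw [hselS t ht, Finset.sum_insert (hselmem t ht)]
    ring
  have hcle : ∀ t, t < T → c t ≤ L := by
    intro t ht
    have h1 : (∑ i ∈ S (t+1), φ i) ≤ L := by rw [hselS t ht]; exact hselfeas t ht
    have h2 := hCpos t
    simp only [hcdef]; linarith
  have hsumc : ∀ n, (∑ t ∈ Finset.range n, c t) = ∑ i ∈ S n, φ i := by
    intro n
    simp only [hcdef]
    rw [Finset.sum_range_sub (fun m => ∑ i ∈ S m, φ i) n, hS0]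
    simp
  have hchain : ∀ b, b ≤ T → ∀ a, a ≤ b → S a ⊆ S b := by
    intro b
    induction b with
    | zero => intro _ a ha; rw [Nat.le_zero.mp ha]
    | succ n ih =>
        intro hb a ha
        rcases Nat.eq_or_lt_of_le ha with h | h
        · rw [h]
        · have han : a ≤ n := Nat.lt_succ_iff.mp h
          have hnT : n < T := Nat.lt_of_lt_of_le (Nat.lt_succ_self n) hb
          rw [hselS n hnT]
          exact (ih (Nat.le_of_lt hnT) a han).trans (Finset.subset_insert _ _)
  have hmarg_sing : ∀ (A : Finset α) (v : α), f (insert v A) - f A ≤ f {v} := by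
    intro A v
    by_cases hv : v ∈ A
    · rw [Finset.insert_eq_self.mpr hv, sub_self]; exact hnonneg _
    · have := hsub ∅ A (Finset.empty_subset A) v hv
      simpa [hf0] using this
  have hsingle : ∀ v ∈ Sopt, f {v} ≤ f G := by
    intro v hv
    exact hG2 v (le_trans (Finset.single_le_sum (fun i _ => (hφ i).le) hv) hopt_feas)
  -- the core per-step inequality
  have hstep_alg : ∀ (gt gt1 ct : ℝ), ct * gt ≤ L * (gt - gt1) → gt1 ≤ (1 - ct / L) * gt := by
    intro gt gt1 ct h
    have h2 : ct * gt / L ≤ gt - gt1 := (div_le_iff₀ hL).mpr (by linarith)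
    have h3 : (1 - ct/L) * gt = gt - ct * gt / L := by ring
    linarith
  have core : ∀ (t : ℕ) (ht : t < T) (E : Finset α), E ⊆ Sopt →
      (∀ v, v ∈ Sopt → v ∉ S t → v ∉ E → (∑ i ∈ insert v (S t), φ i) ≤ L) →
      c t * (f Sopt - f (S t) - ∑ v ∈ E, f {v}) ≤ L * (f (S (t+1)) - f (S t)) := by
    intro t ht E hE hfeas
    have hgain0 : 0 ≤ f (S (t+1)) - f (S t) := by
      rw [hselS t ht]; linarith [hmono (S t) (sel t ht) (hselmem t ht)]
    have hctpos : 0 < c t := by rw [hceq t ht]; exact hφ _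
    have hr0 : 0 ≤ (f (S (t+1)) - f (S t)) / c t := div_nonneg hgain0 hctpos.le
    have hratio : ∀ v, v ∈ Sopt → v ∉ E →
        f (insert v (S t)) - f (S t) ≤ φ v * ((f (S (t+1)) - f (S t)) / c t) := by
      intro v hv hvE
      by_cases hvS : v ∈ S t
      · rw [Finset.insert_eq_self.mpr hvS, sub_self]
        exact mul_nonneg (hφ v).le hr0
      · have hm := hselmax t ht v hvS (hfeas v hv hvS hvE)
        rw [← hselS t ht, ← hceq t ht] at hm
        have := (div_le_iff₀ (hφ v)).mp hm
        linarith [this]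
    have hA1 : f Sopt - f (S t) ≤ ∑ v ∈ Sopt, (f (insert v (S t)) - f (S t)) := by
      have h1 := f_marg_sum f hmono hsub Sopt (S t)
      have h2 : f Sopt ≤ f (S t ∪ Sopt) := f_mono_subset f hmono Finset.subset_union_right
      linarith
    have hsplit : ∑ v ∈ Sopt, (f (insert v (S t)) - f (S t))
        = (∑ v ∈ Sopt \ E, (f (insert v (S t)) - f (S t))) + ∑ v ∈ E, (f (insert v (S t)) - f (S t)) :=
      (Finset.sum_sdiff hE).symm
    have hEb : ∑ v ∈ E, (f (insert v (S t)) - f (S t)) ≤ ∑ v ∈ E, f {v} :=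
      Finset.sum_le_sum (fun v _ => hmarg_sing _ v)
    have hDb : ∑ v ∈ Sopt \ E, (f (insert v (S t)) - f (S t))
        ≤ ∑ v ∈ Sopt \ E, φ v * ((f (S (t+1)) - f (S t)) / c t) :=
      Finset.sum_le_sum (fun v hv =>
        hratio v (Finset.mem_sdiff.mp hv).1 (Finset.mem_sdiff.mp hv).2)
    have hφsum : (∑ v ∈ Sopt \ E, φ v) ≤ L :=
      le_trans (Finset.sum_le_sum_of_subset_of_nonneg (Finset.sdiff_subset)
        (fun i _ _ => (hφ i).le)) hopt_feas
    have hDb2 : ∑ v ∈ Sopt \ E, φ v * ((f (S (t+1)) - f (S t)) / c t)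
        ≤ L * ((f (S (t+1)) - f (S t)) / c t) := by
      rw [← Finset.sum_mul]
      exact mul_le_mul_of_nonneg_right hφsum hr0
    have hX : f Sopt - f (S t) - (∑ v ∈ E, f {v}) ≤ L * ((f (S (t+1)) - f (S t)) / c t) := by
      linarith
    have := mul_le_mul_of_nonneg_left hX hctpos.le
    have heq : c t * (L * ((f (S (t+1)) - f (S t)) / c t)) = L * (f (S (t+1)) - f (S t)) := by
      field_simp
    rw [heq] at this
    exact this
  -- first element outside S T
  have hex0 : ∃ v, v ∈ Sopt ∧ v ∉ S T := by
    by_contra h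
    push_neg at h
    have : f Sopt ≤ f (S T) := f_mono_subset f hmono (fun v hv => h v hv)
    linarith
  obtain ⟨v0, hv0opt, hv0not⟩ := hex0
  have hexP : ∃ n, ∃ v, v ∈ Sopt ∧ v ∉ S n ∧ ¬((∑ i ∈ insert v (S n), φ i) ≤ L) :=
    ⟨T, v0, hv0opt, hv0not, hstop v0 hv0not⟩
  set τ := Nat.find hexP with hτdef
  have hτT : τ ≤ T := Nat.find_min' hexP ⟨v0, hv0opt, hv0not, hstop v0 hv0not⟩
  obtain ⟨u, huopt, hunot, huinf⟩ := Nat.find_spec hexP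
  have hτmin : ∀ t, t < τ → ∀ v, v ∈ Sopt → v ∉ S t → (∑ i ∈ insert v (S t), φ i) ≤ L := by
    intro t ht v hv hvS
    by_contra hcon
    exact Nat.find_min hexP ht ⟨v, hv, hvS, hcon⟩
  have hxC : L < φ u + ∑ i ∈ S τ, φ i := by
    have h1 := not_le.mp huinf
    rwa [Finset.sum_insert hunot] at h1
  -- second element
  have hex2 : ∃ w, w ∈ Sopt ∧ w ∉ S T ∧ w ≠ u := by
    by_contra h
    push_neg at h
    have key : f Sopt - f (S T) ≤ f {u} := by
      have h5 : f Sopt ≤ f (S T ∪ Sopt) := f_mono_subset f hmono Finset.subset_union_right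
      have h6 := f_marg_sum f hmono hsub Sopt (S T)
      have h8 : ∑ v ∈ Sopt, (f (insert v (S T)) - f (S T))
          = (f (insert u (S T)) - f (S T))
            + ∑ v ∈ Sopt.erase u, (f (insert v (S T)) - f (S T)) :=
        (Finset.add_sum_erase _ _ huopt).symm
      have h9 : ∑ v ∈ Sopt.erase u, (f (insert v (S T)) - f (S T)) = 0 := by
        apply Finset.sum_eq_zero
        intro v hv
        have hvS : v ∈ S T := by
          by_contra hvnot
          exact (Finset.mem_erase.mp hv).1 (h v (Finset.mem_of_mem_erase hv) hvnot)
        rw [Finset.insert_eq_self.mpr hvS, sub_self]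
      have h10 := hmarg_sing (S T) u
      linarith
    have h11 := hsingle u huopt
    linarith
  obtain ⟨w0, hw0opt, hw0not, hw0ne⟩ := hex2
  have hexP2 : ∃ n, ∃ v, v ∈ Sopt ∧ v ∉ S n ∧ v ≠ u ∧ ¬((∑ i ∈ insert v (S n), φ i) ≤ L) :=
    ⟨T, w0, hw0opt, hw0not, hw0ne, hstop w0 hw0not⟩
  set τ₂ := Nat.find hexP2 with hτ₂def
  have hτ₂T : τ₂ ≤ T := Nat.find_min' hexP2 ⟨w0, hw0opt, hw0not, hw0ne, hstop w0 hw0not⟩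
  obtain ⟨w, hwopt, hwnot, hwne, hwinf⟩ := Nat.find_spec hexP2
  have hτ₂min : ∀ t, t < τ₂ → ∀ v, v ∈ Sopt → v ∉ S t → v ≠ u →
      (∑ i ∈ insert v (S t), φ i) ≤ L := by
    intro t ht v hv hvS hvu
    by_contra hcon
    exact Nat.find_min hexP2 ht ⟨v, hv, hvS, hvu, hcon⟩
  have hyC : L < φ w + ∑ i ∈ S τ₂, φ i := by
    have h1 := not_le.mp hwinf
    rwa [Finset.sum_insert hwnot] at h1
  have hxy : φ u + φ w ≤ L := by
    have hsubpair : ({u, w} : Finset α) ⊆ Sopt := by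
      intro z hz
      rcases Finset.mem_insert.mp hz with h | h
      · rw [h]; exact huopt
      · rw [Finset.mem_singleton.mp h]; exact hwopt
    have := Finset.sum_le_sum_of_subset_of_nonneg hsubpair (fun i _ _ => (hφ i).le)
    rw [Finset.sum_pair (Ne.symm hwne)] at this
    linarith
  -- decay A : pure decay up to τ
  have hrecA : ∀ t, t < τ → f Sopt - f (S (t+1)) ≤ (1 - c t / L) * (f Sopt - f (S t)) := by
    intro t ht
    have htT : t < T := lt_of_lt_of_le ht hτT
    have hcore := core t htT ∅ (Finset.empty_subset _)
      (fun v hv hvS _ => hτmin t ht v hv hvS)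
    simp only [Finset.sum_empty, sub_zero] at hcore
    exact hstep_alg _ _ _ (by linarith)
  have hdecA := decay_lemma L hL (fun t => f Sopt - f (S t)) c τ
    (by show (0:ℝ) ≤ f Sopt - f (S 0); rw [hS0, hf0]; linarith)
    (fun t ht => hcle t (lt_of_lt_of_le ht hτT)) hrecA
  have hfSτ : f (S τ) ≤ f G := le_trans (f_mono_subset f hmono (hchain T le_rfl τ hτT)) hG1
  have hexpA : Real.exp (-(∑ t ∈ Finset.range τ, c t) / L) ≤ Real.exp ((φ u - L)/L) := by
    apply Real.exp_le_exp.mpr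
    rw [div_le_div_iff₀ hL hL]
    rw [hsumc τ]
    nlinarith [hxC]
  have hA : (1 - Real.exp ((φ u - L)/L)) * f Sopt ≤ f G := by
    have h1 : f Sopt - f (S τ) ≤ Real.exp ((φ u - L)/L) * f Sopt := by
      have h2 : f Sopt - f (S τ) ≤ Real.exp (-(∑ t ∈ Finset.range τ, c t) / L) * (f Sopt - f (S 0)) := hdecA
      rw [hS0, hf0, sub_zero] at h2
      exact h2.trans (mul_le_mul_of_nonneg_right hexpA hΩ0)
    nlinarith [hfSτ, h1]
  -- decay B : decay of (Ω - F) up to τ₂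
  have hrecB : ∀ t, t < τ₂ → f Sopt - f G - f (S (t+1))
      ≤ (1 - c t / L) * (f Sopt - f G - f (S t)) := by
    intro t ht
    have htT : t < T := lt_of_lt_of_le ht hτ₂T
    have hcore := core t htT {u} (Finset.singleton_subset_iff.mpr huopt)
      (fun v hv hvS hvu => hτ₂min t ht v hv hvS (by simpa using hvu))
    rw [Finset.sum_singleton] at hcore
    have hfu : f {u} ≤ f G := hsingle u huopt
    have hctpos : 0 < c t := by rw [hceq t htT]; exact hφ _
    have h1 : c t * (f Sopt - f G - f (S t)) ≤ L * (f (S (t+1)) - f (S t)) :=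
      le_trans (mul_le_mul_of_nonneg_left (by linarith) hctpos.le) hcore
    exact hstep_alg _ _ _ (by linarith)
  have hdecB := decay_lemma L hL (fun t => f Sopt - f G - f (S t)) c τ₂
    (by show (0:ℝ) ≤ f Sopt - f G - f (S 0); rw [hS0, hf0]; linarith)
    (fun t ht => hcle t (lt_of_lt_of_le ht hτ₂T)) hrecB
  have hfSτ₂ : f (S τ₂) ≤ f G := le_trans (f_mono_subset f hmono (hchain T le_rfl τ₂ hτ₂T)) hG1
  have hexpB : Real.exp (-(∑ t ∈ Finset.range τ₂, c t) / L) ≤ Real.exp (-(φ u)/L) := by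
    apply Real.exp_le_exp.mpr
    rw [div_le_div_iff₀ hL hL]
    rw [hsumc τ₂]
    nlinarith [hyC, hxy]
  have hB : (1 - Real.exp (-(φ u)/L)) * (f Sopt - f G) ≤ f G := by
    have h1 : f Sopt - f G - f (S τ₂)
        ≤ Real.exp (-(φ u)/L) * (f Sopt - f G) := by
      have h2 : f Sopt - f G - f (S τ₂)
          ≤ Real.exp (-(∑ t ∈ Finset.range τ₂, c t) / L) * (f Sopt - f G - f (S 0)) := hdecB
      rw [hS0, hf0, sub_zero] at h2
      exact h2.trans (mul_le_mul_of_nonneg_right hexpB (by linarith))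
    nlinarith [hfSτ₂, h1]
  -- final arithmetic
  have hprod : Real.exp ((φ u - L)/L) * (Real.exp (-(φ u)/L) * Real.exp 1) = 1 := by
    rw [← Real.exp_add, ← Real.exp_add, ← Real.exp_zero]
    congr 1
    field_simp
    rw [Real.exp_zero]; ring
  exact final_arith (Real.exp 1) (f G) (f Sopt) (Real.exp (-(φ u)/L))
    (Real.exp ((φ u - L)/L)) hexp1 (Real.exp_pos _) (Real.exp_pos _) hprod hΩ0 hFG0 hA hB
end

section
/- For the greedy algorithm for submodular set covering (minimize Σ_{i∈S} φ_i subject to g(S) ≥ g(V)), the produced set S^G satisfies Σ_{i∈S^G} φ_i ≤ (Σ_{i∈S*} φ_i)(1 + log(g(V)/(g(V) − g(S_{T−1})))), where S* is an optimal solution and S_{T−1} is the penultimate greedy set. -/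
open Finset

/-- Wolsey's guarantee for the greedy algorithm for submodular set covering:
minimize `Σ_{i∈S} φ i` subject to `g S ≥ g V`. -/
theorem greedy_submodular_cover_guarantee {α : Type*} [DecidableEq α] [Fintype α]
    (g : Finset α → ℝ) (φ : α → ℝ)
    (hφ : ∀ i, 0 < φ i)
    (hnonneg : ∀ S : Finset α, 0 ≤ g S) (hg0 : g ∅ = 0)
    (hgV : 0 < g Finset.univ)
    (hmono : ∀ (S : Finset α) (u : α), u ∉ S → g S ≤ g (insert u S))
    (hsub : ∀ (S T : Finset α), S ⊆ T → ∀ u : α, u ∉ T →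
      g (insert u T) - g T ≤ g (insert u S) - g S)
    -- the greedy sequence S 0 = ∅, ..., S T
    (T : ℕ) (hT : 0 < T) (S : ℕ → Finset α) (hS0 : S 0 = ∅)
    (hstep : ∀ t < T, ∃ s : α, s ∉ S t ∧ S (t + 1) = insert s (S t) ∧
      ∀ s' : α, s' ∉ S t →
        (g (insert s' (S t)) - g (S t)) / φ s' ≤ (g (insert s (S t)) - g (S t)) / φ s)
    -- T is the first index achieving full coverage
    (hcover : g (S T) = g Finset.univ)
    (hpenult : g (S (T - 1)) < g Finset.univ)
    -- S* is an optimal cover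
    (Sopt : Finset α) (hopt_cov : g Sopt = g Finset.univ)
    (hopt : ∀ A : Finset α, g A = g Finset.univ → (∑ i ∈ Sopt, φ i) ≤ ∑ i ∈ A, φ i) :
    (∑ i ∈ S T, φ i) ≤ (∑ i ∈ Sopt, φ i) *
      (1 + Real.log (g Finset.univ / (g Finset.univ - g (S (T - 1))))) := by
  classical
  set c := ∑ i ∈ Sopt, φ i with hc_def
  have hc0 : 0 ≤ c := Finset.sum_nonneg fun i _ => (hφ i).le
  -- monotonicity over unions
  have hmonoU : ∀ (D A : Finset α), g A ≤ g (A ∪ D) := by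
    intro D
    induction D using Finset.induction_on with
    | empty => intro A; simp
    | @insert d D' hd ih =>
      intro A
      rw [Finset.union_insert]
      by_cases hdU : d ∈ A ∪ D'
      · rw [Finset.insert_eq_self.mpr hdU]; exact ih A
      · exact (ih A).trans (hmono _ d hdU)
  have hmono' : ∀ A B : Finset α, A ⊆ B → g A ≤ g B := by
    intro A B h
    have := hmonoU B A
    rwa [Finset.union_eq_right.mpr h] at this
  -- subadditivity of marginals
  have hsubadd : ∀ (B A : Finset α),
      g (A ∪ B) - g A ≤ ∑ i ∈ B \ A, (g (insert i A) - g A) := by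
    intro B
    induction B using Finset.induction_on with
    | empty => intro A; simp
    | @insert b B' hb ih =>
      intro A
      by_cases hbA : b ∈ A
      · rw [Finset.union_insert, Finset.insert_eq_self.mpr (Finset.mem_union_left _ hbA),
          Finset.insert_sdiff_of_mem _ hbA]
        exact ih A
      · have hbU : b ∉ A ∪ B' := by
          simp only [Finset.mem_union]; tauto
        have h1 : g (insert b (A ∪ B')) - g (A ∪ B') ≤ g (insert b A) - g A :=
          hsub A (A ∪ B') Finset.subset_union_left b hbU
        rw [Finset.union_insert, Finset.insert_sdiff_of_notMem _ hbA,
          Finset.sum_insert (by simp [Finset.mem_sdiff, hb])]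
        have h2 := ih A
        linarith
  -- greedy values are monotone in t
  have hgmono_step : ∀ t, t < T → g (S t) ≤ g (S (t + 1)) := by
    intro t ht
    obtain ⟨s, hs, hSe, _⟩ := hstep t ht
    rw [hSe]; exact hmono _ s hs
  have hgmono : ∀ t₁ t₂ : ℕ, t₁ ≤ t₂ → t₂ ≤ T → g (S t₁) ≤ g (S t₂) := by
    intro t₁ t₂ h12 h2T
    induction t₂ with
    | zero => have : t₁ = 0 := Nat.le_zero.mp h12; rw [this]
    | succ n ih =>
      rcases Nat.lt_or_ge t₁ (n + 1) with h | h
      · exact (ih (Nat.lt_succ_iff.mp h) (Nat.le_of_succ_le h2T)).trans (hgmono_step n h2T)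
      · have : t₁ = n + 1 := le_antisymm h12 h
        rw [this]
  -- residuals are positive before completion
  have hrpos : ∀ t, t < T → 0 < g Finset.univ - g (S t) := by
    intro t ht
    have h1 : g (S t) ≤ g (S (T - 1)) :=
      hgmono t (T - 1) (Nat.le_sub_one_of_lt ht) (Nat.sub_le T 1)
    linarith
  -- key per-step bound
  have hkey : ∀ t, t < T → ∀ s : α, s ∉ S t → S (t + 1) = insert s (S t) →
      (∀ s' : α, s' ∉ S t →
        (g (insert s' (S t)) - g (S t)) / φ s' ≤ (g (insert s (S t)) - g (S t)) / φ s) →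
      φ s ≤ c * (((g Finset.univ - g (S t)) - (g Finset.univ - g (S (t + 1)))) /
        (g Finset.univ - g (S t))) := by
    intro t ht s hs hSe hbest
    set Δ := g (insert s (S t)) - g (S t) with hΔ
    have hΔ0 : 0 ≤ Δ := by have := hmono (S t) s hs; simp only [hΔ]; linarith
    have hratio0 : 0 ≤ Δ / φ s := div_nonneg hΔ0 (hφ s).le
    have h1 : g Finset.univ - g (S t) ≤ ∑ i ∈ Sopt \ S t, (g (insert i (S t)) - g (S t)) := by
      have h2 : g Sopt ≤ g (S t ∪ Sopt) := hmono' _ _ Finset.subset_union_right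
      have h3 := hsubadd Sopt (S t)
      rw [hopt_cov] at h2
      linarith
    have h4 : ∀ i ∈ Sopt \ S t, g (insert i (S t)) - g (S t) ≤ φ i * (Δ / φ s) := by
      intro i hi
      have hiS : i ∉ S t := (Finset.mem_sdiff.mp hi).2
      have hb := hbest i hiS
      have hφi := hφ i
      calc g (insert i (S t)) - g (S t)
          = ((g (insert i (S t)) - g (S t)) / φ i) * φ i := by field_simp
        _ ≤ (Δ / φ s) * φ i := mul_le_mul_of_nonneg_right hb hφi.le
        _ = φ i * (Δ / φ s) := mul_comm _ _
    have h5 : ∑ i ∈ Sopt \ S t, (g (insert i (S t)) - g (S t)) ≤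
        (∑ i ∈ Sopt \ S t, φ i) * (Δ / φ s) := by
      rw [Finset.sum_mul]
      exact Finset.sum_le_sum h4
    have h6 : (∑ i ∈ Sopt \ S t, φ i) ≤ c :=
      Finset.sum_le_sum_of_subset_of_nonneg (Finset.sdiff_subset) (fun i _ _ => (hφ i).le)
    have h7 : g Finset.univ - g (S t) ≤ c * (Δ / φ s) := by
      calc g Finset.univ - g (S t) ≤ _ := h1
        _ ≤ _ := h5
        _ ≤ c * (Δ / φ s) := mul_le_mul_of_nonneg_right h6 hratio0
    have hrt := hrpos t ht
    have hΔeq : (g Finset.univ - g (S t)) - (g Finset.univ - g (S (t + 1))) = Δ := by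
      rw [hSe, hΔ]; ring
    rw [hΔeq, ← mul_div_assoc, le_div_iff₀ hrt]
    have h8 : (g Finset.univ - g (S t)) * φ s ≤ c * Δ := by
      calc (g Finset.univ - g (S t)) * φ s ≤ c * (Δ / φ s) * φ s :=
            mul_le_mul_of_nonneg_right h7 (hφ s).le
        _ = c * Δ := by rw [mul_assoc, div_mul_cancel₀ _ (hφ s).ne']
    calc φ s * (g Finset.univ - g (S t)) = (g Finset.univ - g (S t)) * φ s := mul_comm _ _
      _ ≤ c * Δ := h8
  -- cumulative sum bound
  have hsum : ∀ t, t ≤ T → (∑ i ∈ S t, φ i) ≤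
      c * ∑ k ∈ Finset.range t,
        ((g Finset.univ - g (S k)) - (g Finset.univ - g (S (k + 1)))) /
          (g Finset.univ - g (S k)) := by
    intro t
    induction t with
    | zero => intro _; simp [hS0]
    | succ n ih =>
      intro hn
      have hnT : n < T := hn
      obtain ⟨s, hs, hSe, hbest⟩ := hstep n hnT
      have hkeyn := hkey n hnT s hs hSe hbest
      have ihn := ih (le_of_lt hnT)
      rw [hSe, Finset.sum_insert hs, Finset.sum_range_succ, mul_add]
      linarith
  -- logarithmic bound on each term
  have hlog : ∀ k, k + 1 < T →
      ((g Finset.univ - g (S k)) - (g Finset.univ - g (S (k + 1)))) /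
        (g Finset.univ - g (S k)) ≤
      Real.log (g Finset.univ - g (S k)) - Real.log (g Finset.univ - g (S (k + 1))) := by
    intro k hk
    have ha : 0 < g Finset.univ - g (S k) := hrpos k (by omega)
    have hb : 0 < g Finset.univ - g (S (k + 1)) := hrpos (k + 1) hk
    have h := Real.log_le_sub_one_of_pos (div_pos hb ha)
    rw [Real.log_div hb.ne' ha.ne'] at h
    have heq : ((g Finset.univ - g (S k)) - (g Finset.univ - g (S (k + 1)))) /
        (g Finset.univ - g (S k)) =
        1 - (g Finset.univ - g (S (k + 1))) / (g Finset.univ - g (S k)) := by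
      field_simp
    rw [heq]
    linarith
  have hT1 : T - 1 + 1 = T := Nat.succ_pred_eq_of_pos hT
  have hrT1 : 0 < g Finset.univ - g (S (T - 1)) := hrpos (T - 1) (Nat.sub_lt hT one_pos)
  -- split off the last term
  have hlast : ((g Finset.univ - g (S (T - 1))) - (g Finset.univ - g (S (T - 1 + 1)))) /
      (g Finset.univ - g (S (T - 1))) = 1 := by
    rw [hT1, hcover]
    field_simp
    ring
  have hAT : ∑ k ∈ Finset.range T,
      ((g Finset.univ - g (S k)) - (g Finset.univ - g (S (k + 1)))) /
        (g Finset.univ - g (S k)) =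
      (∑ k ∈ Finset.range (T - 1),
      ((g Finset.univ - g (S k)) - (g Finset.univ - g (S (k + 1)))) /
        (g Finset.univ - g (S k))) + 1 := by
    conv_lhs => rw [← hT1]
    rw [Finset.sum_range_succ, hlast]
  have hAT1 : ∑ k ∈ Finset.range (T - 1),
      ((g Finset.univ - g (S k)) - (g Finset.univ - g (S (k + 1)))) /
        (g Finset.univ - g (S k)) ≤
      Real.log (g Finset.univ) - Real.log (g Finset.univ - g (S (T - 1))) := by
    calc ∑ k ∈ Finset.range (T - 1),
        ((g Finset.univ - g (S k)) - (g Finset.univ - g (S (k + 1)))) /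
          (g Finset.univ - g (S k))
        ≤ ∑ k ∈ Finset.range (T - 1),
          (Real.log (g Finset.univ - g (S k)) - Real.log (g Finset.univ - g (S (k + 1)))) := by
          apply Finset.sum_le_sum
          intro k hk
          apply hlog
          have := Finset.mem_range.mp hk
          omega
      _ = Real.log (g Finset.univ - g (S 0)) - Real.log (g Finset.univ - g (S (T - 1))) :=
          Finset.sum_range_sub' (fun k => Real.log (g Finset.univ - g (S k))) (T - 1)
      _ = Real.log (g Finset.univ) - Real.log (g Finset.univ - g (S (T - 1))) := by
          rw [hS0, hg0, sub_zero]
  have hlogdiv : Real.log (g Finset.univ / (g Finset.univ - g (S (T - 1)))) =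
      Real.log (g Finset.univ) - Real.log (g Finset.univ - g (S (T - 1))) :=
    Real.log_div hgV.ne' hrT1.ne'
  calc (∑ i ∈ S T, φ i)
      ≤ c * ∑ k ∈ Finset.range T,
        ((g Finset.univ - g (S k)) - (g Finset.univ - g (S (k + 1)))) /
          (g Finset.univ - g (S k)) := hsum T le_rfl
    _ = c * ((∑ k ∈ Finset.range (T - 1),
        ((g Finset.univ - g (S k)) - (g Finset.univ - g (S (k + 1)))) /
          (g Finset.univ - g (S k))) + 1) := by rw [hAT]
    _ ≤ c * (1 + Real.log (g Finset.univ / (g Finset.univ - g (S (T - 1))))) := by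
        apply mul_le_mul_of_nonneg_left _ hc0
        rw [hlogdiv]
        linarith
end

section
/- For a monotone non-decreasing submodular function f with f(∅) = 0 and the greedy sequence S_0 = ∅, S_{t+1} = S_t ∪ {s_t} where s_t maximizes the marginal gain f(S_t ∪ {s}) − f(S_t) over s ∈ V \ S_t, after k steps with k ≥ |S*| one has f(S_k) ≥ (1 − (1 − 1/|S*|)^k) f(S*) ≥ (1 − 1/e) f(S*) when k = |S*|, for any fixed set S*. -/
open Finset

lemma greedy_mono_subset {α : Type*} [DecidableEq α]
    (f : Finset α → ℝ)
    (hmono : ∀ (S : Finset α) (u : α), u ∉ S → f S ≤ f (insert u S)) :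
    ∀ (A B : Finset α), A ⊆ B → f A ≤ f B := by
  intro A B hAB
  have key : ∀ C : Finset α, f A ≤ f (A ∪ C) := by
    intro C
    induction C using Finset.induction_on with
    | empty => simp
    | @insert a C' hnotmem ih =>
      rw [Finset.union_insert]
      by_cases ha : a ∈ A ∪ C'
      · rwa [Finset.insert_eq_self.mpr ha]
      · exact le_trans ih (hmono _ a ha)
  have h := key B
  rwa [Finset.union_eq_right.mpr hAB] at h

lemma greedy_gain_bound {α : Type*} [DecidableEq α]
    (f : Finset α → ℝ) (T : Finset α) (δ : ℝ) (hδ : 0 ≤ δ)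
    (hsub : ∀ (S T' : Finset α), S ⊆ T' → ∀ u : α, u ∉ T' →
      f (insert u T') - f T' ≤ f (insert u S) - f S)
    (hgain : ∀ u : α, f (insert u T) - f T ≤ δ) :
    ∀ C : Finset α, f (T ∪ C) ≤ f T + C.card * δ := by
  intro C
  induction C using Finset.induction_on with
  | empty => simp
  | @insert a C' ha ih =>
    rw [Finset.union_insert, Finset.card_insert_of_notMem ha]
    by_cases hm : a ∈ T ∪ C'
    · rw [Finset.insert_eq_self.mpr hm]
      push_cast
      nlinarith
    · have h1 : f (insert a (T ∪ C')) - f (T ∪ C') ≤ f (insert a T) - f T :=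
        hsub T (T ∪ C') Finset.subset_union_left a hm
      have h2 := hgain a
      push_cast
      nlinarith

/-- Classical cardinality-constrained greedy guarantee for monotone
submodular maximization. -/
theorem greedy_cardinality_guarantee {α : Type*} [DecidableEq α] [Fintype α]
    (f : Finset α → ℝ)
    (hnonneg : ∀ S : Finset α, 0 ≤ f S) (hf0 : f ∅ = 0)
    (hmono : ∀ (S : Finset α) (u : α), u ∉ S → f S ≤ f (insert u S))
    (hsub : ∀ (S T : Finset α), S ⊆ T → ∀ u : α, u ∉ T →
      f (insert u T) - f T ≤ f (insert u S) - f S)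
    (S : ℕ → Finset α) (hS0 : S 0 = ∅)
    (hstep : ∀ t : ℕ,
      (∃ s : α, s ∉ S t ∧ S (t + 1) = insert s (S t) ∧
        ∀ s' : α, s' ∉ S t →
          f (insert s' (S t)) - f (S t) ≤ f (insert s (S t)) - f (S t)) ∨
      (S t = Finset.univ ∧ S (t + 1) = S t))
    (Sopt : Finset α) (hne : Sopt.Nonempty) :
    ∀ k : ℕ, Sopt.card ≤ k →
      f (S k) ≥ (1 - (1 - 1 / (Sopt.card : ℝ)) ^ k) * f Sopt ∧
      (k = Sopt.card → f (S k) ≥ (1 - 1 / Real.exp 1) * f Sopt) := by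
  have hm1 : (1:ℝ) ≤ (Sopt.card : ℝ) := by
    exact_mod_cast Finset.card_pos.mpr hne
  set m : ℝ := (Sopt.card : ℝ) with hmdef
  have hm0 : 0 < m := by linarith
  have hq0 : 0 ≤ 1 - 1/m := by
    have : 1/m ≤ 1 := by
      rw [div_le_one hm0]; linarith
    linarith
  -- Key induction: the gap shrinks geometrically.
  have key : ∀ t : ℕ, f Sopt - f (S t) ≤ (1 - 1/m)^t * f Sopt := by
    intro t
    induction t with
    | zero => simp [hS0, hf0]
    | succ t ih =>
      rcases hstep t with ⟨s, hs, hSt1, hmax⟩ | ⟨huniv, hSt1⟩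
      · have hδ0 : 0 ≤ f (S (t+1)) - f (S t) := by
          rw [hSt1]; linarith [hmono (S t) s hs]
        set δ := f (S (t+1)) - f (S t) with hδdef
        have hgain : ∀ u : α, f (insert u (S t)) - f (S t) ≤ δ := by
          intro u
          by_cases hu : u ∈ S t
          · rw [Finset.insert_eq_self.mpr hu]; simpa using hδ0
          · have := hmax u hu
            rw [hδdef, hSt1]; linarith
        have hb := greedy_gain_bound f (S t) δ hδ0 hsub hgain Sopt
        have hopt : f Sopt ≤ f (S t ∪ Sopt) :=
          greedy_mono_subset f hmono _ _ Finset.subset_union_right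
        have hgap : f Sopt - f (S t) ≤ m * δ := by
          rw [hmdef]; linarith
        have h4 : (f Sopt - f (S t)) / m ≤ δ := by
          rw [div_le_iff₀ hm0]; linarith [hgap]
        have h3 : (1 - 1/m) * (f Sopt - f (S t))
            = (f Sopt - f (S t)) - (f Sopt - f (S t)) / m := by ring
        have hstep2 : f Sopt - f (S (t+1)) ≤ (1 - 1/m) * (f Sopt - f (S t)) := by
          rw [h3]; linarith
        calc f Sopt - f (S (t+1)) ≤ (1 - 1/m) * (f Sopt - f (S t)) := hstep2
          _ ≤ (1 - 1/m) * ((1 - 1/m)^t * f Sopt) :=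
            mul_le_mul_of_nonneg_left ih hq0
          _ = (1 - 1/m)^(t+1) * f Sopt := by ring
      · have hle : f Sopt ≤ f (S t) := by
          have := greedy_mono_subset f hmono Sopt Finset.univ (Finset.subset_univ _)
          rwa [← huniv] at this
        have hpos : 0 ≤ (1 - 1/m)^(t+1) * f Sopt :=
          mul_nonneg (pow_nonneg hq0 _) (hnonneg _)
        rw [hSt1]; linarith
  intro k hk
  have hkey := key k
  have hmain : f (S k) ≥ (1 - (1 - 1/m)^k) * f Sopt := by
    have : (1 - (1 - 1/m)^k) * f Sopt = f Sopt - (1 - 1/m)^k * f Sopt := by ring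
    rw [this]; linarith
  refine ⟨hmain, ?_⟩
  intro hkm
  -- (1 - 1/m)^m ≤ e^{-1}
  have h5 : 1 - 1/m ≤ Real.exp (-(1/m)) := by
    have := Real.add_one_le_exp (-(1/m)); linarith
  have h6 : (1 - 1/m)^k ≤ (Real.exp (-(1/m)))^k := pow_le_pow_left₀ hq0 h5 k
  have h7 : (Real.exp (-(1/m)))^k = Real.exp ((k : ℝ) * (-(1/m))) := by
    rw [← Real.exp_nat_mul]
  have h8 : (k : ℝ) * (-(1/m)) = -1 := by
    subst hkm
    rw [hmdef]
    field_simp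
  have h9 : (1 - 1/m)^k ≤ 1 / Real.exp 1 := by
    rw [h7, h8, Real.exp_neg] at h6
    simpa [one_div] using h6
  have hfpos := hnonneg Sopt
  have : (1 - 1/Real.exp 1) * f Sopt ≤ (1 - (1 - 1/m)^k) * f Sopt :=
    mul_le_mul_of_nonneg_right (by linarith) hfpos
  linarith
end
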